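/- If (μ,p) is a bidder-optimal core outcome, i.e., a core outcome such that for every core outcome (ν,q) one has π_i(μ(i),p) ≥ π_i(ν(i),q) for all bidders i, then (μ,p) maximizes welfare among all core outcomes: Σ_{i∈B} v_i(μ(i)) ≥ Σ_{i∈B} v_i(ν(i)) for every core outcome (ν,q). -/

import Mathlib

open scoped Classical

/-- Goods are indexed by `Fin (m+1)`; good `0` is the dummy good. -/
abbrev Good (m : ℕ) : Type := Fin (m + 1)

/-- Utility `π_i(j,p)`: `v_i(j) - p(j)` if `p(j) ≤ b^i`, and `-∞` otherwise. -/
noncomputable def util {n m : ℕ} (v : Fin n → Good m → ℕ) (b : Fin n → ℕ)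
    (p : Good m → ℝ) (i : Fin n) (j : Good m) : WithBot ℝ :=
  if p j ≤ (b i : ℝ) then (((v i j : ℝ) - p j : ℝ) : WithBot ℝ) else ⊥

/-- An assignment: each non-dummy good is assigned to at most one bidder. -/
def IsAssignment {n m : ℕ} (μ : Fin n → Good m) : Prop :=
  ∀ j : Good m, j ≠ 0 → ∀ i i' : Fin n, μ i = j → μ i' = j → i = i'

/-- A price vector: nonnegative prices with `p(0) = 0`. -/
def IsPriceVec {m : ℕ} (p : Good m → ℝ) : Prop :=
  p 0 = 0 ∧ ∀ j, 0 ≤ p j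

/-- An outcome: an assignment together with a price vector such that no budget is
violated and every positively priced good is assigned to exactly one bidder. -/
def IsOutcome {n m : ℕ} (b : Fin n → ℕ) (μ : Fin n → Good m) (p : Good m → ℝ) : Prop :=
  IsAssignment μ ∧ IsPriceVec p ∧ (∀ i, p (μ i) ≤ (b i : ℝ)) ∧
    ∀ j : Good m, 0 < p j → ∃! i, μ i = j

/-- A blocking pair `(i,j)`: `π_i(j,p) > π_i(μ(i),p)` and `p(j) < b^i`. -/
def IsBlockingPair {n m : ℕ} (v : Fin n → Good m → ℕ) (b : Fin n → ℕ)
    (μ : Fin n → Good m) (p : Good m → ℝ) (i : Fin n) (j : Good m) : Prop :=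
  util v b p i (μ i) < util v b p i j ∧ p j < (b i : ℝ)

/-- A core outcome: an outcome with no blocking pairs. -/
def IsCore {n m : ℕ} (v : Fin n → Good m → ℕ) (b : Fin n → ℕ)
    (μ : Fin n → Good m) (p : Good m → ℝ) : Prop :=
  IsOutcome b μ p ∧ ∀ i j, ¬ IsBlockingPair v b μ p i j

/-!
Write `u_i = v_i(μ(i)) - p(μ(i))` and `u'_i = v_i(ν(i)) - q(ν(i))` for the utilities in the two
core outcomes. Since positively priced goods are sold exactly once, the welfare of an outcome is
the total utility plus the total price, so it suffices to show
`∑_j (q_j - p_j) ≤ ∑_i (u_i - u'_i)`. A good with `q_j > p_j` is sold under `ν` to some `i`, and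
`p_j < q_j ≤ b^i`; as `(i, j)` does not block `(μ, p)`, `v_i(j) - p_j ≤ u_i`, i.e.
`q_j - p_j ≤ u_i - u'_i`. Bidder optimality gives `u_i - u'_i ≥ 0`, so summing the positive parts
of `q_j - p_j` over the goods sold under `ν` yields the bound.
-/

section

variable {n m : ℕ} {v : Fin n → Good m → ℕ} {b : Fin n → ℕ} {μ : Fin n → Good m}
  {p : Good m → ℝ}

lemma util_of_le_budget {i : Fin n} {j : Good m} (h : p j ≤ b i) :
    util v b p i j = ((v i j - p j : ℝ) : WithBot ℝ) :=
  if_pos h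

lemma IsOutcome.sum_comp_eq_sum (h : IsOutcome b μ p) {f : Good m → ℝ}
    (hf : ∀ j, f j ≠ 0 → 0 < p j) : ∑ i, f (μ i) = ∑ j, f j := by
  obtain ⟨-, -, -, hsold⟩ := h
  refine Finset.sum_bij_ne_zero (fun i _ _ => μ i) (fun _ _ _ => Finset.mem_univ _)
    (fun i _ hi i' _ _ hii' => ?_) (fun j _ hj => ?_) (fun _ _ _ => rfl)
  · exact (hsold _ (hf _ hi)).unique rfl hii'.symm
  · obtain ⟨i, hi, -⟩ := hsold j (hf j hj)
    exact ⟨i, Finset.mem_univ _, hi ▸ hj, hi⟩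

lemma IsOutcome.sum_value_eq (h : IsOutcome b μ p) :
    ∑ i, (v i (μ i) : ℝ) = ∑ i, ((v i (μ i) : ℝ) - p (μ i)) + ∑ j, p j := by
  rw [← h.sum_comp_eq_sum fun j hj => (h.2.1.2 j).lt_of_ne' hj, ← Finset.sum_add_distrib]
  simp

lemma IsCore.value_sub_price_le (h : IsCore v b μ p) {i : Fin n} {j : Good m}
    (hj : p j < b i) : (v i j : ℝ) - p j ≤ v i (μ i) - p (μ i) := by
  have hnb : ¬ util v b p i (μ i) < util v b p i j := fun hlt => h.2 i j ⟨hlt, hj⟩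
  rwa [not_lt, util_of_le_budget hj.le, util_of_le_budget (h.1.2.2.1 i),
    WithBot.coe_le_coe] at hnb

lemma IsCore.price_gap_pos_le_utility_gap (h : IsCore v b μ p) {ν : Fin n → Good m}
    {q : Good m → ℝ} (hν : IsOutcome b ν q) {i : Fin n}
    (hu : (v i (ν i) : ℝ) - q (ν i) ≤ v i (μ i) - p (μ i)) :
    max (q (ν i) - p (ν i)) 0 ≤ (v i (μ i) - p (μ i)) - (v i (ν i) - q (ν i)) := by
  refine max_le ?_ (by linarith)
  rcases lt_or_ge (p (ν i)) (q (ν i)) with hpq | hqp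
  · linarith [h.value_sub_price_le (hpq.trans_le (hν.2.2.1 i))]
  · linarith

end

theorem bidder_optimal_core_welfare_max_general {n m : ℕ}
    (v : Fin n → Good m → ℕ) (b : Fin n → ℕ)
    (μ : Fin n → Good m) (p : Good m → ℝ)
    (hcore : IsCore v b μ p)
    (hopt : ∀ (ν : Fin n → Good m) (q : Good m → ℝ), IsCore v b ν q →
      ∀ i, util v b q i (ν i) ≤ util v b p i (μ i)) :
    ∀ (ν : Fin n → Good m) (q : Good m → ℝ), IsCore v b ν q →
      ∑ i, v i (ν i) ≤ ∑ i, v i (μ i) := by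
  intro ν q hν
  have hu : ∀ i, (v i (ν i) : ℝ) - q (ν i) ≤ v i (μ i) - p (μ i) := fun i => by
    simpa only [util_of_le_budget (hν.1.2.2.1 i), util_of_le_budget (hcore.1.2.2.1 i),
      WithBot.coe_le_coe] using hopt ν q hν i
  have hsupp : ∀ j, max (q j - p j) 0 ≠ 0 → 0 < q j := fun j hj =>
    (hcore.1.2.1.2 j).trans_lt (by simpa using lt_of_le_of_ne' (le_max_right _ _) hj)
  have hgap : ∑ j, q j - ∑ j, p j ≤
      ∑ i, (((v i (μ i) : ℝ) - p (μ i)) - (v i (ν i) - q (ν i))) :=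
    calc ∑ j, q j - ∑ j, p j
        ≤ ∑ j, max (q j - p j) 0 := by
          rw [← Finset.sum_sub_distrib]; exact Finset.sum_le_sum fun j _ => le_max_left _ _
      _ = ∑ i, max (q (ν i) - p (ν i)) 0 := (hν.1.sum_comp_eq_sum hsupp).symm
      _ ≤ _ := Finset.sum_le_sum fun i _ => hcore.price_gap_pos_le_utility_gap hν.1 (hu i)
  have hwel := hcore.1.sum_value_eq (v := v)
  have hwel' := hν.1.sum_value_eq (v := v)
  rw [Finset.sum_sub_distrib] at hgap
  exact_mod_cast (show (∑ i, (v i (ν i) : ℝ)) ≤ ∑ i, (v i (μ i) : ℝ) by linarith)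

/-- A bidder-optimal core outcome (one whose bidder utilities weakly
dominate those of every core outcome) maximizes welfare among all core outcomes. -/
theorem bidder_optimal_core_welfare_max {n m : ℕ}
    (v : Fin n → Good m → ℕ) (b : Fin n → ℕ)
    (hv0 : ∀ i, v i 0 = 0) (hb : ∀ i, 0 < b i)
    (μ : Fin n → Good m) (p : Good m → ℝ)
    (hcore : IsCore v b μ p)
    (hopt : ∀ (ν : Fin n → Good m) (q : Good m → ℝ), IsCore v b ν q →
      ∀ i, util v b q i (ν i) ≤ util v b p i (μ i)) :
    ∀ (ν : Fin n → Good m) (q : Good m → ℝ), IsCore v b ν q →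
      ∑ i, v i (ν i) ≤ ∑ i, v i (μ i) :=
  bidder_optimal_core_welfare_max_general v b μ p hcore hopt
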